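/- arXiv:1105.2133 — 7 statements merged into one kernel-verified Lean document; each statement's English description precedes it below -/
import Mathlib

section
/- Let S = [0,T] (or [0,∞)) and let x : S → ℝ be continuous on S and differentiable on S \ {0}. If there is a constant C such that for all t ∈ S \ {0}, x(t) ≥ C implies x'(t) ≤ 0, then sup_{t ∈ S} x(t) ≤ max{x(0), C}. -/
/-! Let `s` be the last point of `[a, b]` at which `f ≤ M`. If `s < b`, then `f > M` on `(s, b]`,
so `f' ≤ 0` there and `f` is antitone on `[s, b]`, whence `f b ≤ f s ≤ M`, a contradiction. -/

open Set

theorem le_of_hasDerivAt_nonpos_of_lt {f f' : ℝ → ℝ} {a b M : ℝ} (hab : a ≤ b)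
    (hf : ContinuousOn f (Icc a b)) (hf' : ∀ t ∈ Ioo a b, HasDerivAt f (f' t) t)
    (hM : ∀ t ∈ Ioo a b, M < f t → f' t ≤ 0) (ha : f a ≤ M) : f b ≤ M := by
  by_contra! hb
  set K := Icc a b ∩ f ⁻¹' Iic M
  have hK : IsCompact K :=
    isCompact_Icc.of_isClosed_subset
      (hf.preimage_isClosed_of_isClosed isClosed_Icc isClosed_Iic) inter_subset_left
  obtain ⟨s, ⟨⟨has, hsb⟩, hfs⟩, hs_last⟩ := hK.exists_isGreatest ⟨a, ⟨left_mem_Icc.2 hab, ha⟩⟩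
  have hsb' : s < b := hsb.lt_of_ne (by rintro rfl; exact hfs.not_gt hb)
  have h_above : ∀ u ∈ Ioo s b, M < f u := fun u hu ↦ by
    by_contra! hfu
    exact (hs_last ⟨⟨has.trans hu.1.le, hu.2.le⟩, hfu⟩).not_gt hu.1
  have h_sub : Ioo s b ⊆ Ioo a b := Ioo_subset_Ioo_left has
  have h_anti : AntitoneOn f (Icc s b) := by
    refine antitoneOn_of_hasDerivWithinAt_nonpos (f' := f') (convex_Icc s b)
      (hf.mono (Icc_subset_Icc_left has)) (fun u hu ↦ ?_) (fun u hu ↦ ?_) <;>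
      rw [interior_Icc] at hu
    · exact (hf' u (h_sub hu)).hasDerivWithinAt
    · exact hM u (h_sub hu) (h_above u hu)
  exact (h_anti (left_mem_Icc.2 hsb'.le) (right_mem_Icc.2 hsb'.le) hsb'.le).trans hfs |>.not_gt hb

theorem barrier_principle_general (S : Set ℝ) (T : ℝ)
    (hS : S = Set.Icc 0 T ∨ S = Set.Ici 0)
    (x x' : ℝ → ℝ) (hcont : ContinuousOn x S)
    (hderiv : ∀ t ∈ S \ {0}, HasDerivAt x (x' t) t)
    (C : ℝ) (hC : ∀ t ∈ S \ {0}, C ≤ x t → x' t ≤ 0) :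
    ∀ t ∈ S, x t ≤ max (x 0) C := by
  intro t ht
  have h_Icc_sub : Icc 0 t ⊆ S := by
    rcases hS with rfl | rfl
    · exact Icc_subset_Icc_right ht.2
    · exact fun u hu ↦ hu.1
  have ht0 : 0 ≤ t := by
    rcases hS with rfl | rfl
    exacts [ht.1, ht]
  have h_int : ∀ u ∈ Ioo 0 t, u ∈ S \ {0} := fun u hu ↦
    ⟨h_Icc_sub (Ioo_subset_Icc_self hu), hu.1.ne'⟩
  refine le_of_hasDerivAt_nonpos_of_lt ht0 (hcont.mono h_Icc_sub)
    (fun u hu ↦ hderiv u (h_int u hu)) (fun u hu hxu ↦ ?_) (le_max_left _ _)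
  exact hC u (h_int u hu) ((le_max_right _ _).trans hxu.le)

/-- Lemma 1 (barrier principle): if x is continuous on S (= [0,T] or [0,∞)),
differentiable on S \ {0}, and x(t) ≥ C implies x'(t) ≤ 0 there, then
sup_{t ∈ S} x(t) ≤ max {x(0), C}. -/
theorem barrier_principle (S : Set ℝ) (T : ℝ) (hT : 0 ≤ T)
    (hS : S = Set.Icc 0 T ∨ S = Set.Ici 0)
    (x x' : ℝ → ℝ) (hcont : ContinuousOn x S)
    (hderiv : ∀ t ∈ S \ {0}, HasDerivAt x (x' t) t)
    (C : ℝ) (hC : ∀ t ∈ S \ {0}, C ≤ x t → x' t ≤ 0) :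
    ∀ t ∈ S, x t ≤ max (x 0) C :=
  barrier_principle_general S T hS x x' hcont hderiv C hC
end

section
/- Let Λ ∈ (0,∞)^K with ‖Λ‖₁ > e^{−1} and p ∈ (0,∞)^K. If z, z̃ : [0,∞) → ℝ₊^K are two continuous functions, both nonzero for all t > 0, with the same nonzero initial state z(0) = z̃(0) ≠ 0, and both satisfy z(t) = z(0) + tΛ − e^{−1}∫₀ᵗ z(s)/‖z(s)‖₁ ds − p ∗ ∫₀ᵗ z(s) ds, then z ≡ z̃. -/
/-!
On a compact time interval `[0, b]` both solutions are nonnegative and nonzero, so their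
coordinate sums `‖·‖₁` are bounded below by some `ε > 0`, and there `x ↦ x / ‖x‖₁` is Lipschitz.
Subtracting the two integral equations, the initial state and the drift `tΛ` cancel, which gives
`‖z t - z̃ t‖ ≤ C ∫₀ᵗ ‖z s - z̃ s‖ ds` on `[0, b]`; Gronwall's inequality then forces `z = z̃`.
-/

open Set intervalIntegral
open MeasureTheory (volume)

theorem eq_zero_of_le_mul_integral {u : ℝ → ℝ} {C b : ℝ} (hu : Continuous u)
    (hu_nonneg : ∀ t ∈ Icc 0 b, 0 ≤ u t)
    (h : ∀ t ∈ Icc 0 b, u t ≤ C * ∫ s in (0:ℝ)..t, u s) :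
    ∀ t ∈ Icc 0 b, u t = 0 := by
  have hderiv : ∀ t, HasDerivAt (fun t => ∫ s in (0:ℝ)..t, u s) (u t) t := fun t =>
    integral_hasDerivAt_right (hu.intervalIntegrable _ _)
      hu.aestronglyMeasurable.stronglyMeasurableAtFilter hu.continuousAt
  have hint_nonneg : ∀ t ∈ Icc 0 b, 0 ≤ ∫ s in (0:ℝ)..t, u s := fun t ht =>
    integral_nonneg ht.1 fun s hs => hu_nonneg s ⟨hs.1, hs.2.trans ht.2⟩
  have hint_zero : ∀ t ∈ Icc 0 b, ∫ s in (0:ℝ)..t, u s = 0 :=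
    eq_zero_of_abs_deriv_le_mul_abs_self_of_eq_zero_right
      (fun t _ => (hderiv t).continuousAt.continuousWithinAt)
      (fun t _ => (hderiv t).hasDerivWithinAt) integral_same fun t ht => by
        have ht' := Ico_subset_Icc_self ht
        rw [Real.norm_of_nonneg (hu_nonneg t ht'), Real.norm_of_nonneg (hint_nonneg t ht')]
        exact h t ht'
  intro t ht
  exact le_antisymm (by simpa [hint_zero t ht] using h t ht) (hu_nonneg t ht)

theorem abs_integral_sub_integral_le {f g u : ℝ → ℝ} {a b L : ℝ} (hab : a ≤ b)
    (hf : IntervalIntegrable f volume a b) (hg : IntervalIntegrable g volume a b)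
    (hu : IntervalIntegrable u volume a b) (h : ∀ x ∈ Icc a b, |f x - g x| ≤ L * u x) :
    |(∫ x in a..b, f x) - ∫ x in a..b, g x| ≤ L * ∫ x in a..b, u x := by
  rw [← integral_sub hf hg, ← integral_const_mul]
  exact (abs_integral_le_integral_abs hab).trans
    (integral_mono_on hab (hf.sub hg).abs (hu.const_mul L) h)

theorem IsCompact.exists_pos_forall_le {X : Type*} [TopologicalSpace X] {s : Set X}
    (hs : IsCompact s) {f : X → ℝ} (hf : ContinuousOn f s) (hpos : ∀ x ∈ s, 0 < f x) :
    ∃ ε > 0, ∀ x ∈ s, ε ≤ f x := by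
  rcases s.eq_empty_or_nonempty with rfl | hne
  · exact ⟨1, one_pos, by simp⟩
  · obtain ⟨x, hx, hmin⟩ := hs.exists_isMinOn hne hf
    exact ⟨f x, hpos x hx, hmin⟩

section NormalizedVector

variable {ι : Type*} [Fintype ι]

theorem exists_pos_forall_le_sum {w : ℝ → ι → ℝ} (hw : Continuous w) {s : Set ℝ}
    (hs : IsCompact s) (hw_nonneg : ∀ t ∈ s, 0 ≤ w t) (hw_ne : ∀ t ∈ s, w t ≠ 0) :
    ∃ ε > 0, ∀ t ∈ s, ε ≤ ∑ j, w t j :=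
  hs.exists_pos_forall_le
    (continuous_finsetSum _ fun j _ => (continuous_apply j).comp hw).continuousOn
    fun t ht => Fintype.sum_pos ((hw_nonneg t ht).lt_of_ne' (hw_ne t ht))

theorem Continuous.intervalIntegrable_div_sum {w : ℝ → ι → ℝ} (hw : Continuous w) {a b : ℝ}
    (hS : ∀ t ∈ uIcc a b, ∑ j, w t j ≠ 0) (i : ι) :
    IntervalIntegrable (fun t => w t i / ∑ j, w t j) volume a b :=
  ContinuousOn.intervalIntegrable <| ((continuous_apply i).comp hw).continuousOn.div
    (continuous_finsetSum _ fun j _ => (continuous_apply j).comp hw).continuousOn hS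

theorem abs_div_sum_sub_div_sum_le {x y : ι → ℝ} {ε : ℝ}
    (hε : 0 < ε) (hy : 0 ≤ y) (hεx : ε ≤ ∑ j, x j) (hεy : ε ≤ ∑ j, y j) (i : ι) :
    |x i / ∑ j, x j - y i / ∑ j, y j| ≤ (1 + Fintype.card ι) / ε * ‖x - y‖ := by
  set S := ∑ j, x j
  set T := ∑ j, y j
  have hS : 0 < S := hε.trans_le hεx
  have hT : 0 < T := hε.trans_le hεy
  have hcoord : ∀ j, |x j - y j| ≤ ‖x - y‖ := fun j => norm_le_pi_norm (x - y) j
  have hsum : |S - T| ≤ Fintype.card ι * ‖x - y‖ := by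
    calc |S - T| = |∑ j, (x j - y j)| := by rw [Finset.sum_sub_distrib]
      _ ≤ ∑ j, |x j - y j| := Finset.abs_sum_le_sum_abs _ _
      _ ≤ ∑ _j : ι, ‖x - y‖ := Finset.sum_le_sum fun j _ => hcoord j
      _ = Fintype.card ι * ‖x - y‖ := by simp
  have hyT : y i / T ≤ 1 :=
    (div_le_one hT).2 (Finset.single_le_sum (fun j _ => hy j) (Finset.mem_univ i))
  have hsplit : x i / S - y i / T = ((x i - y i) + y i / T * (T - S)) / S := by
    field_simp; ring
  calc |x i / S - y i / T| = |(x i - y i) + y i / T * (T - S)| / S := by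
        rw [hsplit, abs_div, abs_of_pos hS]
    _ ≤ (|x i - y i| + |S - T|) / S := by
        gcongr
        refine (abs_add_le _ _).trans (add_le_add le_rfl ?_)
        rw [abs_mul, abs_sub_comm T, abs_of_nonneg (div_nonneg (hy i) hT.le)]
        exact mul_le_of_le_one_left (abs_nonneg _) hyT
    _ ≤ (‖x - y‖ + Fintype.card ι * ‖x - y‖) / ε := by
        gcongr
        exact hcoord i
    _ = (1 + Fintype.card ι) / ε * ‖x - y‖ := by ring

end NormalizedVector

/-- As in the theorem, the outer integral extends over the `p`-term, which is constant in `s`. -/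
def FluidEquation (K : ℕ) (Λ p : Fin K → ℝ) (z : ℝ → Fin K → ℝ) : Prop :=
  ∀ t : ℝ, 0 ≤ t → ∀ i,
    z t i = z 0 i + t * Λ i
      - Real.exp (-1) * ∫ s in (0:ℝ)..t, z s i / ∑ j, z s j
      - p i * ∫ s in (0:ℝ)..t, z s i

namespace FluidEquation

variable {K : ℕ} {Λ p : Fin K → ℝ} {z zt : ℝ → Fin K → ℝ}

theorem apply_eq (hz : FluidEquation K Λ p z) {t : ℝ} (ht : 0 ≤ t) {i : Fin K}
    (hint : IntervalIntegrable (fun s => z s i / ∑ j, z s j) volume 0 t) :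
    z t i = z 0 i + t * Λ i - Real.exp (-1) *
      ((∫ s in (0:ℝ)..t, z s i / ∑ j, z s j) - t * (p i * ∫ s in (0:ℝ)..t, z s i)) := by
  rw [hz t ht i, integral_sub hint intervalIntegrable_const, integral_const, smul_eq_mul,
    sub_zero]

theorem norm_sub_le_mul_integral (hz : FluidEquation K Λ p z) (hzt : FluidEquation K Λ p zt)
    (hzc : Continuous z) (hztc : Continuous zt) (h0 : z 0 = zt 0) {b ε : ℝ} (hε : 0 < ε)
    (hzt_nonneg : ∀ t ∈ Icc 0 b, 0 ≤ zt t) (hεz : ∀ t ∈ Icc 0 b, ε ≤ ∑ j, z t j)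
    (hεzt : ∀ t ∈ Icc 0 b, ε ≤ ∑ j, zt t j) (t : ℝ) (ht : t ∈ Icc 0 b) :
    ‖z t - zt t‖ ≤ Real.exp (-1) * ((1 + K) / ε + b * ‖p‖) * ∫ s in (0:ℝ)..t, ‖z s - zt s‖ := by
  obtain ⟨ht0, htb⟩ := ht
  have hIcc : ∀ s ∈ uIcc 0 t, s ∈ Icc 0 b := fun s hs =>
    ⟨(uIcc_of_le ht0 ▸ hs).1, (uIcc_of_le ht0 ▸ hs).2.trans htb⟩
  have hU : 0 ≤ ∫ s in (0:ℝ)..t, ‖z s - zt s‖ := integral_nonneg ht0 fun _ _ => norm_nonneg _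
  have hint : ∀ w : ℝ → Fin K → ℝ, Continuous w → (∀ s ∈ Icc 0 b, ε ≤ ∑ j, w s j) →
      ∀ i, IntervalIntegrable (fun s => w s i / ∑ j, w s j) volume 0 t := fun w hw hεw =>
    hw.intervalIntegrable_div_sum fun s hs => (hε.trans_le (hεw s (hIcc s hs))).ne'
  have hUint : IntervalIntegrable (fun s => ‖z s - zt s‖) volume 0 t :=
    (hzc.sub hztc).norm.intervalIntegrable 0 t
  have hb : 0 ≤ b := ht0.trans htb
  refine (pi_norm_le_iff_of_nonneg (by positivity)).2 fun i => ?_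
  have hratio := abs_integral_sub_integral_le ht0 (hint z hzc hεz i) (hint zt hztc hεzt i) hUint
    fun s hs => abs_div_sum_sub_div_sum_le hε (hzt_nonneg s (hIcc s (Icc_subset_uIcc hs)))
      (hεz s (hIcc s (Icc_subset_uIcc hs))) (hεzt s (hIcc s (Icc_subset_uIcc hs))) i
  have hcoord := abs_integral_sub_integral_le (L := 1) ht0
    (f := fun s => z s i) (g := fun s => zt s i)
    (((continuous_apply i).comp hzc).intervalIntegrable 0 t)
    (((continuous_apply i).comp hztc).intervalIntegrable 0 t) hUint
    fun s _ => by simpa using norm_le_pi_norm (z s - zt s) i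
  rw [Fintype.card_fin] at hratio
  rw [Pi.sub_apply, Real.norm_eq_abs, hz.apply_eq ht0 (hint z hzc hεz i),
    hzt.apply_eq ht0 (hint zt hztc hεzt i), h0]
  set R := ∫ s in (0:ℝ)..t, z s i / ∑ j, z s j
  set R' := ∫ s in (0:ℝ)..t, zt s i / ∑ j, zt s j
  set I := ∫ s in (0:ℝ)..t, z s i
  set I' := ∫ s in (0:ℝ)..t, zt s i
  set U := ∫ s in (0:ℝ)..t, ‖z s - zt s‖
  have hdiff : zt 0 i + t * Λ i - Real.exp (-1) * (R - t * (p i * I))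
      - (zt 0 i + t * Λ i - Real.exp (-1) * (R' - t * (p i * I')))
      = -(Real.exp (-1) * ((R - R') - t * p i * (I - I'))) := by ring
  calc _ = Real.exp (-1) * |(R - R') - t * p i * (I - I')| := by
        rw [hdiff, abs_neg, abs_mul, abs_of_pos (Real.exp_pos _)]
    _ ≤ Real.exp (-1) * (|R - R'| + t * ‖p‖ * |I - I'|) := by
        gcongr
        refine (abs_sub _ _).trans (add_le_add le_rfl ?_)
        rw [abs_mul, abs_mul, abs_of_nonneg ht0]
        gcongr
        exact norm_le_pi_norm p i
    _ ≤ Real.exp (-1) * ((1 + K) / ε * U + b * ‖p‖ * (1 * U)) := by gcongr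
    _ = Real.exp (-1) * ((1 + K) / ε + b * ‖p‖) * U := by ring

end FluidEquation

theorem fluid_model_unique_nonzero_initial_general (K : ℕ) (Λ p : Fin K → ℝ)
    (z zt : ℝ → Fin K → ℝ)
    (hzc : Continuous z) (hztc : Continuous zt)
    (hznn : ∀ t : ℝ, 0 ≤ t → ∀ i, 0 ≤ z t i)
    (hztnn : ∀ t : ℝ, 0 ≤ t → ∀ i, 0 ≤ zt t i)
    (hzne : ∀ t : ℝ, 0 < t → z t ≠ 0)
    (hztne : ∀ t : ℝ, 0 < t → zt t ≠ 0)
    (h0 : z 0 = zt 0) (h0ne : z 0 ≠ 0)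
    (hz : ∀ t : ℝ, 0 ≤ t → ∀ i,
      z t i = z 0 i + t * Λ i
        - Real.exp (-1) * ∫ s in (0:ℝ)..t, z s i / ∑ j, z s j
        - p i * ∫ s in (0:ℝ)..t, z s i)
    (hzt : ∀ t : ℝ, 0 ≤ t → ∀ i,
      zt t i = zt 0 i + t * Λ i
        - Real.exp (-1) * ∫ s in (0:ℝ)..t, zt s i / ∑ j, zt s j
        - p i * ∫ s in (0:ℝ)..t, zt s i) :
    ∀ t : ℝ, 0 ≤ t → z t = zt t := by
  intro b hb
  have hne : ∀ w : ℝ → Fin K → ℝ, (∀ t : ℝ, 0 < t → w t ≠ 0) → w 0 ≠ 0 →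
      ∀ t ∈ Icc 0 b, w t ≠ 0 :=
    fun w hw hw0 t ht => ht.1.eq_or_lt.elim (fun h => h ▸ hw0) (hw t)
  obtain ⟨ε₁, hε₁, hz_ge⟩ := exists_pos_forall_le_sum hzc isCompact_Icc
    (fun t ht => hznn t ht.1) (hne z hzne h0ne)
  obtain ⟨ε₂, hε₂, hzt_ge⟩ := exists_pos_forall_le_sum hztc isCompact_Icc
    (fun t ht => hztnn t ht.1) (hne zt hztne (h0 ▸ h0ne))
  have hbound := FluidEquation.norm_sub_le_mul_integral hz hzt hzc hztc h0 (lt_min hε₁ hε₂)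
    (fun t ht => hztnn t ht.1) (fun t ht => (min_le_left _ _).trans (hz_ge t ht))
    (fun t ht => (min_le_right _ _).trans (hzt_ge t ht))
  have hzero := eq_zero_of_le_mul_integral (hzc.sub hztc).norm (fun t _ => norm_nonneg _) hbound
  exact sub_eq_zero.mp (norm_eq_zero.mp (hzero b ⟨hb, le_rfl⟩))

/-- Uniqueness of the multiclass fluid model solution for a nonzero initial
state: two continuous nonnegative solutions of the fluid model integral
equation with the same nonzero initial state coincide. -/
theorem fluid_model_unique_nonzero_initial (K : ℕ) (Λ p : Fin K → ℝ)
    (hΛ : ∀ i, 0 < Λ i) (hΛ1 : Real.exp (-1) < ∑ i, Λ i) (hp : ∀ i, 0 < p i)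
    (z zt : ℝ → Fin K → ℝ)
    (hzc : Continuous z) (hztc : Continuous zt)
    (hznn : ∀ t : ℝ, 0 ≤ t → ∀ i, 0 ≤ z t i)
    (hztnn : ∀ t : ℝ, 0 ≤ t → ∀ i, 0 ≤ zt t i)
    (hzne : ∀ t : ℝ, 0 < t → z t ≠ 0)
    (hztne : ∀ t : ℝ, 0 < t → zt t ≠ 0)
    (h0 : z 0 = zt 0) (h0ne : z 0 ≠ 0)
    (hz : ∀ t : ℝ, 0 ≤ t → ∀ i,
      z t i = z 0 i + t * Λ i
        - Real.exp (-1) * ∫ s in (0:ℝ)..t, z s i / ∑ j, z s j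
        - p i * ∫ s in (0:ℝ)..t, z s i)
    (hzt : ∀ t : ℝ, 0 ≤ t → ∀ i,
      zt t i = zt 0 i + t * Λ i
        - Real.exp (-1) * ∫ s in (0:ℝ)..t, zt s i / ∑ j, zt s j
        - p i * ∫ s in (0:ℝ)..t, zt s i) :
    ∀ t : ℝ, 0 ≤ t → z t = zt t :=
  fluid_model_unique_nonzero_initial_general K Λ p z zt hzc hztc hznn hztnn hzne hztne h0 h0ne hz
    hzt
end

section
/- Let z : [0,∞) → ℝ₊^K be a fluid model solution (continuous, nonzero for t > 0, satisfying z'(t) = Λ − p∗z(t) − e^{−1} z(t)/‖z(t)‖₁ for t > 0). Then for all t ≥ 0, ‖Λ‖₁ − e^{−1} − p^* ‖z(t)‖₁ ≤ ‖z(t)‖₁' ≤ ‖Λ‖₁ − e^{−1} − p_* ‖z(t)‖₁, where p_* = minᵢ pᵢ and p^* = maxᵢ pᵢ; consequently sup_{t≥0} ‖z(t)‖₁ ≤ max{‖z(0)‖₁, (‖Λ‖₁ − e^{−1})/p_*} and inf_{t≥0} ‖z(t)‖₁ ≥ min{‖z(0)‖₁, (‖Λ‖₁ − e^{−1})/p^*}.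 -/
/-!
Summing the fluid equations over the coordinates, the normalised term `e⁻¹ z/‖z‖₁` contributes
exactly `e⁻¹`, so the total mass `m(t) = ‖z(t)‖₁` satisfies `m' = ‖Λ‖₁ − e⁻¹ − ∑ pᵢ zᵢ`, and
`p_* m ≤ ∑ pᵢ zᵢ ≤ p^* m` gives the two differential inequalities. A linear differential
inequality `m' ≤ a − k m` with `k > 0` keeps `m` below `max (m 0) (a / k)`: by Grönwall, `m`
stays below a convex combination of its initial value and `a / k`.
-/

open Set Filter Topology

section Comparison

variable {f f' : ℝ → ℝ} {a m : ℝ}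

lemma gronwallBound_neg_le_max (δ : ℝ) {x : ℝ} (hm : 0 < m) (hx : 0 ≤ x) :
    gronwallBound δ (-m) a x ≤ max δ (a / m) := by
  rw [gronwallBound_of_K_ne_0 (neg_ne_zero.2 hm.ne')]
  dsimp only
  have he1 : Real.exp (-m * x) ≤ 1 := Real.exp_le_one_iff.2 (by nlinarith)
  have hconvex : a / -m * (Real.exp (-m * x) - 1) = a / m * (1 - Real.exp (-m * x)) := by
    rw [div_neg]; ring
  rw [hconvex]
  nlinarith [le_max_left δ (a / m), le_max_right δ (a / m), Real.exp_pos (-m * x)]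

lemma le_max_of_hasDerivAt_le_sub_mul (hm : 0 < m) (hf : ContinuousOn f (Ici 0))
    (hf' : ∀ s, 0 < s → HasDerivAt f (f' s) s) (bound : ∀ s, 0 < s → f' s ≤ a - m * f s)
    {t : ℝ} (ht : 0 ≤ t) : f t ≤ max (f 0) (a / m) := by
  rcases ht.eq_or_lt with rfl | ht
  · exact le_max_left _ _
  have from_pos : ∀ s ∈ Ioc 0 t, f t ≤ max (f s) (a / m) := by
    rintro s ⟨hs, hst⟩
    have hgronwall := le_gronwallBound_of_liminf_deriv_right_le (K := -m) (ε := a)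
      (hf.mono fun x hx => hs.le.trans hx.1)
      (fun x hx r hr => (hf' x (hs.trans_le hx.1)).hasDerivWithinAt.liminf_right_slope_le hr)
      le_rfl (fun x hx => by linarith [bound x (hs.trans_le hx.1)]) t ⟨hst, le_rfl⟩
    exact hgronwall.trans (gronwallBound_neg_le_max _ hm (sub_nonneg.2 hst))
  have hlim : Tendsto (fun s => max (f s) (a / m)) (𝓝[>] 0) (𝓝 (max (f 0) (a / m))) :=
    ((hf 0 self_mem_Ici).mono Ioi_subset_Ici_self).max tendsto_const_nhds
  exact ge_of_tendsto hlim (eventually_of_mem (Ioc_mem_nhdsGT ht) from_pos)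

lemma min_le_of_sub_mul_le_hasDerivAt (hm : 0 < m) (hf : ContinuousOn f (Ici 0))
    (hf' : ∀ s, 0 < s → HasDerivAt f (f' s) s) (bound : ∀ s, 0 < s → a - m * f s ≤ f' s)
    {t : ℝ} (ht : 0 ≤ t) : min (f 0) (a / m) ≤ f t := by
  have hneg := le_max_of_hasDerivAt_le_sub_mul (f := -f) (f' := -f') (a := -a) hm hf.neg
    (fun s hs => (hf' s hs).neg) (fun s hs => by simp only [Pi.neg_apply]; linarith [bound s hs])
    ht
  rwa [Pi.neg_apply, Pi.neg_apply, neg_div, max_neg_neg, neg_le_neg_iff] at hneg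

end Comparison

section TotalMass

variable {ι : Type*} [Fintype ι]

lemma sum_sub_mul_sub_mul_div_sum (Λ p x : ι → ℝ) (c : ℝ) (hx : ∑ i, x i ≠ 0) :
    ∑ i, (Λ i - p i * x i - c * x i / ∑ j, x j) = ∑ i, Λ i - c - ∑ i, p i * x i := by
  rw [Finset.sum_sub_distrib, Finset.sum_sub_distrib, ← Finset.sum_div, ← Finset.mul_sum,
    mul_div_cancel_right₀ c hx]
  ring

variable [Nonempty ι] {x : ι → ℝ}

lemma inf'_mul_sum_le_sum_mul (p : ι → ℝ) (hx : 0 ≤ x) :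
    Finset.univ.inf' Finset.univ_nonempty p * ∑ i, x i ≤ ∑ i, p i * x i := by
  rw [Finset.mul_sum]
  exact Finset.sum_le_sum fun i hi =>
    mul_le_mul_of_nonneg_right (Finset.inf'_le p hi) (hx i)

lemma sum_mul_le_sup'_mul_sum (p : ι → ℝ) (hx : 0 ≤ x) :
    ∑ i, p i * x i ≤ Finset.univ.sup' Finset.univ_nonempty p * ∑ i, x i := by
  rw [Finset.mul_sum]
  exact Finset.sum_le_sum fun i hi =>
    mul_le_mul_of_nonneg_right (Finset.le_sup' p hi) (hx i)

end TotalMass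

theorem fluid_model_norm_bounds_general (K : ℕ) (Λ p : Fin (K + 1) → ℝ)
    (hp : ∀ i, 0 < p i)
    (z z' : ℝ → Fin (K + 1) → ℝ)
    (hzc : Continuous z)
    (hznn : ∀ t : ℝ, 0 ≤ t → ∀ i, 0 ≤ z t i)
    (hzne : ∀ t : ℝ, 0 < t → z t ≠ 0)
    (hderiv : ∀ t : ℝ, 0 < t → ∀ i, HasDerivAt (fun s => z s i) (z' t i) t)
    (hode : ∀ t : ℝ, 0 < t → ∀ i,
      z' t i = Λ i - p i * z t i - Real.exp (-1) * z t i / ∑ j, z t j) :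
    (∀ t : ℝ, 0 < t →
      (∑ i, Λ i) - Real.exp (-1)
          - (Finset.univ.sup' Finset.univ_nonempty p) * ∑ i, z t i
        ≤ ∑ i, z' t i ∧
      ∑ i, z' t i
        ≤ (∑ i, Λ i) - Real.exp (-1)
          - (Finset.univ.inf' Finset.univ_nonempty p) * ∑ i, z t i) ∧
    (∀ t : ℝ, 0 ≤ t →
      ∑ i, z t i ≤ max (∑ i, z 0 i)
        (((∑ i, Λ i) - Real.exp (-1)) / Finset.univ.inf' Finset.univ_nonempty p)) ∧
    (∀ t : ℝ, 0 ≤ t →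
      min (∑ i, z 0 i)
        (((∑ i, Λ i) - Real.exp (-1)) / Finset.univ.sup' Finset.univ_nonempty p)
        ≤ ∑ i, z t i) := by
  have hmass_deriv : ∀ t, 0 < t →
      ∑ i, z' t i = (∑ i, Λ i) - Real.exp (-1) - ∑ i, p i * z t i := fun t ht => by
    rw [Finset.sum_congr rfl fun i _ => hode t ht i]
    exact sum_sub_mul_sub_mul_div_sum Λ p (z t) _
      (Fintype.sum_pos (lt_of_le_of_ne (hznn t ht.le) (hzne t ht).symm)).ne'
  have hsandwich : ∀ t, 0 < t →
      (∑ i, Λ i) - Real.exp (-1) - Finset.univ.sup' Finset.univ_nonempty p * ∑ i, z t i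
          ≤ ∑ i, z' t i ∧
        ∑ i, z' t i
          ≤ (∑ i, Λ i) - Real.exp (-1) - Finset.univ.inf' Finset.univ_nonempty p * ∑ i, z t i :=
    fun t ht => by
      rw [hmass_deriv t ht]
      exact ⟨by linarith [sum_mul_le_sup'_mul_sum p (hznn t ht.le)],
        by linarith [inf'_mul_sum_le_sum_mul p (hznn t ht.le)]⟩
  have hmass_cont : ContinuousOn (fun t => ∑ i, z t i) (Ici 0) := by fun_prop
  have hmass_hasDeriv : ∀ t, 0 < t → HasDerivAt (fun s => ∑ i, z s i) (∑ i, z' t i) t :=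
    fun t ht => HasDerivAt.fun_sum fun i _ => hderiv t ht i
  refine ⟨hsandwich, fun t ht => ?_, fun t ht => ?_⟩
  · exact le_max_of_hasDerivAt_le_sub_mul ((Finset.lt_inf'_iff _).2 fun i _ => hp i)
      hmass_cont hmass_hasDeriv (fun s hs => (hsandwich s hs).2) ht
  · exact min_le_of_sub_mul_le_hasDerivAt
      ((Finset.lt_sup'_iff _).2 ⟨0, Finset.mem_univ _, hp 0⟩)
      hmass_cont hmass_hasDeriv (fun s hs => (hsandwich s hs).1) ht

/-- Bounds for the total mass of a fluid model solution: the derivative of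
‖z(t)‖₁ is sandwiched between ‖Λ‖₁ − e⁻¹ − p* ‖z(t)‖₁ and
‖Λ‖₁ − e⁻¹ − p_* ‖z(t)‖₁, and consequently ‖z(t)‖₁ is bounded above by
max{‖z(0)‖₁, (‖Λ‖₁ − e⁻¹)/p_*} and below by min{‖z(0)‖₁, (‖Λ‖₁ − e⁻¹)/p*}. -/
theorem fluid_model_norm_bounds (K : ℕ) (Λ p : Fin (K + 1) → ℝ)
    (hΛ : ∀ i, 0 < Λ i) (hΛ1 : Real.exp (-1) < ∑ i, Λ i) (hp : ∀ i, 0 < p i)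
    (z z' : ℝ → Fin (K + 1) → ℝ)
    (hzc : Continuous z)
    (hznn : ∀ t : ℝ, 0 ≤ t → ∀ i, 0 ≤ z t i)
    (hzne : ∀ t : ℝ, 0 < t → z t ≠ 0)
    (hderiv : ∀ t : ℝ, 0 < t → ∀ i, HasDerivAt (fun s => z s i) (z' t i) t)
    (hode : ∀ t : ℝ, 0 < t → ∀ i,
      z' t i = Λ i - p i * z t i - Real.exp (-1) * z t i / ∑ j, z t j) :
    (∀ t : ℝ, 0 < t →
      (∑ i, Λ i) - Real.exp (-1)
          - (Finset.univ.sup' Finset.univ_nonempty p) * ∑ i, z t i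
        ≤ ∑ i, z' t i ∧
      ∑ i, z' t i
        ≤ (∑ i, Λ i) - Real.exp (-1)
          - (Finset.univ.inf' Finset.univ_nonempty p) * ∑ i, z t i) ∧
    (∀ t : ℝ, 0 ≤ t →
      ∑ i, z t i ≤ max (∑ i, z 0 i)
        (((∑ i, Λ i) - Real.exp (-1)) / Finset.univ.inf' Finset.univ_nonempty p)) ∧
    (∀ t : ℝ, 0 ≤ t →
      min (∑ i, z 0 i)
        (((∑ i, Λ i) - Real.exp (-1)) / Finset.univ.sup' Finset.univ_nonempty p)
        ≤ ∑ i, z t i) :=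
  fluid_model_norm_bounds_general K Λ p hp z z' hzc hznn hzne hderiv hode
end

section
/- Let Λᵢ > 0, pᵢ > 0 (i = 1,…,K) with ‖Λ‖₁ > e^{−1}, and let x > 0 satisfy Σᵢ pᵢΛᵢ/(x + pᵢ) = ‖Λ‖₁ − e^{−1}. Then the vector z^e with zᵢ^e = Λᵢ/(x + pᵢ) satisfies the equilibrium equation Λᵢ − pᵢ zᵢ^e − e^{−1} zᵢ^e/‖z^e‖₁ = 0 for every i, and moreover x = e^{−1}/‖z^e‖₁. -/
/-! Multiplying the defining equation of `x` out gives `x * ‖zᵉ‖₁ = e⁻¹`, since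
`x zᵢ = Λᵢ - pᵢ zᵢ` term by term. Hence `‖zᵉ‖₁ ≠ 0` and `x = e⁻¹ / ‖zᵉ‖₁`, and the equilibrium
equation becomes `Λᵢ - (pᵢ + x) zᵢ = 0`, which is the definition of `zᵢ`. -/

section Equilibrium

variable {ι 𝕜 : Type*} [Fintype ι] [Field 𝕜]

lemma mul_div_add_eq_sub {a b x : 𝕜} (h : x + b ≠ 0) : x * (a / (x + b)) = a - b * a / (x + b) := by
  field_simp
  ring

lemma mul_sum_div_add_eq_sub {Λ p : ι → 𝕜} {x : 𝕜} (h : ∀ i, x + p i ≠ 0) :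
    x * ∑ i, Λ i / (x + p i) = ∑ i, Λ i - ∑ i, p i * Λ i / (x + p i) := by
  simp only [Finset.mul_sum, mul_div_add_eq_sub (h _), Finset.sum_sub_distrib]

lemma sub_mul_div_add_sub_mul_div_add_eq_zero {a b x : 𝕜} (h : x + b ≠ 0) :
    a - b * (a / (x + b)) - x * (a / (x + b)) = 0 := by
  field_simp
  ring

end Equilibrium

theorem equilibrium_point_formula_general (K : ℕ) (Λ p : Fin K → ℝ)
    (hp : ∀ i, 0 < p i)
    (x : ℝ) (hx : 0 < x)
    (hxeq : ∑ i, p i * Λ i / (x + p i) = (∑ i, Λ i) - Real.exp (-1)) :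
    (∀ i, Λ i - p i * (Λ i / (x + p i))
        - Real.exp (-1) * (Λ i / (x + p i)) / (∑ j, Λ j / (x + p j)) = 0) ∧
    x = Real.exp (-1) / ∑ j, Λ j / (x + p j) := by
  have hxp : ∀ i, x + p i ≠ 0 := fun i => (add_pos hx (hp i)).ne'
  have hxS : x * ∑ j, Λ j / (x + p j) = Real.exp (-1) := by
    rw [mul_sum_div_add_eq_sub hxp, hxeq, sub_sub_cancel]
  have hS : ∑ j, Λ j / (x + p j) ≠ 0 :=
    right_ne_zero_of_mul (hxS ▸ (Real.exp_pos _).ne')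
  refine ⟨fun i => ?_, eq_div_of_mul_eq hS hxS⟩
  rw [← hxS, mul_right_comm, mul_div_cancel_right₀ _ hS]
  exact sub_mul_div_add_sub_mul_div_add_eq_zero (hxp i)

/-- The vector zᵢ = Λᵢ/(x + pᵢ) satisfies the equilibrium equation of the
fluid model, and x = e⁻¹/‖zᵉ‖₁. -/
theorem equilibrium_point_formula (K : ℕ) (Λ p : Fin K → ℝ)
    (hΛ : ∀ i, 0 < Λ i) (hp : ∀ i, 0 < p i)
    (hΛ1 : Real.exp (-1) < ∑ i, Λ i)
    (x : ℝ) (hx : 0 < x)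
    (hxeq : ∑ i, p i * Λ i / (x + p i) = (∑ i, Λ i) - Real.exp (-1)) :
    (∀ i, Λ i - p i * (Λ i / (x + p i))
        - Real.exp (-1) * (Λ i / (x + p i)) / (∑ j, Λ j / (x + p j)) = 0) ∧
    x = Real.exp (-1) / ∑ j, Λ j / (x + p j) :=
  equilibrium_point_formula_general K Λ p hp x hx hxeq
end

section
/- Let Λᵢ > 0, pᵢ > 0 (i = 1,…,K) with ‖Λ‖₁ > e^{−1}. If z ∈ (0,∞)^K satisfies Λᵢ − pᵢ zᵢ − e^{−1} zᵢ/‖z‖₁ = 0 for every i, then zᵢ = Λᵢ/(x + pᵢ) where x = e^{−1}/‖z‖₁, and x satisfies Σᵢ pᵢΛᵢ/(x + pᵢ) = ‖Λ‖₁ − e^{−1}. In particular, the equilibrium point of the fluid model equation is unique. -/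
/-!
Writing `x = e⁻¹ / ‖z‖₁`, the equilibrium equation reads `Λᵢ = (x + pᵢ) zᵢ`, which solves for `zᵢ`.
Multiplying by `pᵢ` and summing, `Σ pᵢ zᵢ = ‖Λ‖₁ - x ‖z‖₁ = ‖Λ‖₁ - e⁻¹`.
-/

open Finset

section Equilibrium

variable {ι : Type*} [Fintype ι] {Λ p z : ι → ℝ} {c : ℝ}

theorem add_mul_eq_of_equilibrium (heq : ∀ i, Λ i - p i * z i - c * z i / ∑ j, z j = 0)
    (i : ι) : (c / ∑ j, z j + p i) * z i = Λ i := by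
  linear_combination -heq i

theorem eq_div_of_equilibrium (hΛ : ∀ i, Λ i ≠ 0)
    (heq : ∀ i, Λ i - p i * z i - c * z i / ∑ j, z j = 0) (i : ι) :
    z i = Λ i / (c / ∑ j, z j + p i) := by
  have hmul := add_mul_eq_of_equilibrium heq i
  refine eq_div_of_mul_eq (left_ne_zero_of_mul (hmul ▸ hΛ i)) ?_
  rw [mul_comm, hmul]

theorem sum_mul_div_of_equilibrium (hΛ : ∀ i, Λ i ≠ 0) (hz : ∑ j, z j ≠ 0)
    (heq : ∀ i, Λ i - p i * z i - c * z i / ∑ j, z j = 0) :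
    ∑ i, p i * Λ i / (c / ∑ j, z j + p i) = ∑ i, Λ i - c := by
  calc ∑ i, p i * Λ i / (c / ∑ j, z j + p i)
      = ∑ i, (Λ i - c / (∑ j, z j) * z i) := by
        refine sum_congr rfl fun i _ => ?_
        rw [mul_div_assoc, ← eq_div_of_equilibrium hΛ heq i]
        linear_combination -heq i
    _ = ∑ i, Λ i - c := by
        rw [sum_sub_distrib, ← mul_sum, div_mul_cancel₀ _ hz]

end Equilibrium

theorem equilibrium_point_unique_general (K : ℕ) (Λ p : Fin K → ℝ)
    (hΛ : ∀ i, 0 < Λ i)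
    (hΛ1 : Real.exp (-1) < ∑ i, Λ i)
    (z : Fin K → ℝ) (hz : ∀ i, 0 < z i)
    (heq : ∀ i, Λ i - p i * z i - Real.exp (-1) * z i / (∑ j, z j) = 0) :
    (∀ i, z i = Λ i / (Real.exp (-1) / (∑ j, z j) + p i)) ∧
    ∑ i, p i * Λ i / (Real.exp (-1) / (∑ j, z j) + p i)
      = (∑ i, Λ i) - Real.exp (-1) := by
  have hΛ0 : ∀ i, Λ i ≠ 0 := fun i => (hΛ i).ne'
  have hK : (univ : Finset (Fin K)).Nonempty :=
    nonempty_of_sum_ne_zero ((Real.exp_pos _).trans hΛ1).ne'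
  have hS : 0 < ∑ j, z j := sum_pos (fun i _ => hz i) hK
  exact ⟨eq_div_of_equilibrium hΛ0 heq, sum_mul_div_of_equilibrium hΛ0 hS.ne' heq⟩

/-- Converse: any positive solution z of the equilibrium equation is of the
form zᵢ = Λᵢ/(x + pᵢ) with x = e⁻¹/‖z‖₁ satisfying the scalar equation;
hence the equilibrium point of the fluid model is unique. -/
theorem equilibrium_point_unique (K : ℕ) (Λ p : Fin K → ℝ)
    (hΛ : ∀ i, 0 < Λ i) (hp : ∀ i, 0 < p i)
    (hΛ1 : Real.exp (-1) < ∑ i, Λ i)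
    (z : Fin K → ℝ) (hz : ∀ i, 0 < z i)
    (heq : ∀ i, Λ i - p i * z i - Real.exp (-1) * z i / (∑ j, z j) = 0) :
    (∀ i, z i = Λ i / (Real.exp (-1) / (∑ j, z j) + p i)) ∧
    ∑ i, p i * Λ i / (Real.exp (-1) / (∑ j, z j) + p i)
      = (∑ i, Λ i) - Real.exp (-1) :=
  equilibrium_point_unique_general K Λ p hΛ hΛ1 z hz heq
end

section
/- Let a₁ = … = a_K = a ≥ 0, Λ ∈ (0,∞)^K with ‖Λ‖₁ > e^{−1}. The unique function z : [0,∞) → ℝ₊^K, continuous and nonzero for t > 0, satisfying z(0) = 0 and z'(t) = Λ − a z(t) − e^{−1} z(t)/‖z(t)‖₁ for t > 0, is given by zᵢ(t) = (Λᵢ/‖Λ‖₁)(‖Λ‖₁ − e^{−1}) t if a = 0, and zᵢ(t) = (Λᵢ/‖Λ‖₁)((‖Λ‖₁ − e^{−1})/a)(1 − e^{−at}) if a > 0. -/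
/-!
The total mass `y = ∑ zᵢ` is positive for `t > 0`, so the saturation terms add up to exactly
`e⁻¹` and `y` solves the affine equation `y' = (‖Λ‖₁ - e⁻¹) - a y` with `y 0 = 0`, which
determines it. Knowing `y`, each deviation `w = zᵢ - (Λᵢ / ‖Λ‖₁) y` solves the linear equation
`w' = -(a + e⁻¹ / y) w`. Its coefficient blows up at `t = 0`, but the integrating factor
`e^{(1+κ)at} y^κ` with `κ = e⁻¹ / (‖Λ‖₁ - e⁻¹)` is still continuous there, so `w ≡ 0`.
-/

open Real Set

/-- The solution of `F' = c - a F`, `F 0 = 0`. -/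
noncomputable def relaxation (c a t : ℝ) : ℝ :=
  if a = 0 then c * t else c / a * (1 - exp (-(a * t)))

theorem relaxation_zero (c a : ℝ) : relaxation c a 0 = 0 := by
  unfold relaxation; split_ifs <;> simp

theorem continuous_relaxation (c a : ℝ) : Continuous (relaxation c a) := by
  unfold relaxation; split_ifs <;> fun_prop

theorem hasDerivAt_relaxation (c a t : ℝ) :
    HasDerivAt (relaxation c a) (c - a * relaxation c a t) t := by
  unfold relaxation
  split_ifs with ha
  · simpa [ha] using (hasDerivAt_id t).const_mul c
  · have h := (((hasDerivAt_id t).const_mul a).neg.exp.const_sub 1).const_mul (c / a)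
    refine h.congr_deriv ?_
    simp only [Pi.neg_apply, id]
    field_simp
    ring

theorem relaxation_pos {c a t : ℝ} (hc : 0 < c) (ht : 0 < t) : 0 < relaxation c a t := by
  unfold relaxation
  split_ifs with ha
  · positivity
  rw [div_mul_eq_mul_div, mul_div_assoc]
  refine mul_pos hc ?_
  rcases lt_or_gt_of_ne ha with ha | ha
  · exact div_pos_of_neg_of_neg (by simp; nlinarith) ha
  · exact div_pos (by simp; nlinarith) ha

theorem relaxation_nonneg {c a t : ℝ} (hc : 0 < c) (ht : 0 ≤ t) : 0 ≤ relaxation c a t := by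
  rcases ht.eq_or_lt with rfl | ht
  · exact (relaxation_zero c a).ge
  · exact (relaxation_pos hc ht).le

theorem hasDerivAt_exp_mul_rpow_relaxation {c a b t : ℝ} (hc : c ≠ 0)
    (hF : relaxation c a t ≠ 0) :
    HasDerivAt (fun s => exp ((1 + b / c) * a * s) * relaxation c a s ^ (b / c))
      ((a + b / relaxation c a t) * (exp ((1 + b / c) * a * t) * relaxation c a t ^ (b / c))) t := by
  have hexp := ((hasDerivAt_id t).const_mul ((1 + b / c) * a)).exp
  have hrpow := (hasDerivAt_relaxation c a t).rpow_const (p := b / c) (Or.inl hF)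
  refine (hexp.mul hrpow).congr_deriv ?_
  simp only [id, Real.rpow_sub_one hF]
  field_simp
  ring

theorem mul_relaxation_eq_ite (r c a t : ℝ) :
    r * relaxation c a t = if a = 0 then r * c * t else r * (c / a) * (1 - exp (-(a * t))) := by
  unfold relaxation; split_ifs <;> ring

/-- `(μ w)' = 0` on `(0, ∞)`, so `μ w` keeps its value `0` at `t = 0`. -/
theorem eq_zero_of_hasDerivAt_of_integratingFactor {w μ g : ℝ → ℝ}
    (hw : ContinuousOn w (Ici 0)) (hμ : ContinuousOn μ (Ici 0))
    (hw' : ∀ t, 0 < t → HasDerivAt w (-(g t * w t)) t)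
    (hμ' : ∀ t, 0 < t → HasDerivAt μ (g t * μ t) t)
    (hμ_ne : ∀ t, 0 < t → μ t ≠ 0) (hw0 : w 0 = 0) {t : ℝ} (ht : 0 ≤ t) : w t = 0 := by
  rcases ht.eq_or_lt with rfl | ht
  · exact hw0
  obtain ⟨c, -, hslope⟩ := exists_hasDerivAt_eq_slope (fun s => μ s * w s) (fun _ => 0) ht
    ((hμ.mul hw).mono Icc_subset_Ici_self)
    fun s hs => ((hμ' s hs.1).mul (hw' s hs.1)).congr_deriv (by ring)
  have hμw : μ t * w t = 0 := by
    rw [eq_comm, div_eq_zero_iff, hw0, mul_zero, sub_zero] at hslope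
    exact hslope.resolve_right (by linarith)
  exact (mul_eq_zero.mp hμw).resolve_left (hμ_ne t ht)

section FluidModel

variable {ι : Type*} [Fintype ι] {Λ : ι → ℝ} {a b : ℝ} {z : ℝ → ι → ℝ}

/-- The fluid model started at `0` with all impatience rates equal to `a`; the paper has
`b = e⁻¹`. -/
structure IsFluidSolution (Λ : ι → ℝ) (a b : ℝ) (z : ℝ → ι → ℝ) : Prop where
  continuousOn : ContinuousOn z (Ici 0)
  nonneg : ∀ t : ℝ, 0 ≤ t → ∀ i, 0 ≤ z t i
  ne_zero : ∀ t : ℝ, 0 < t → z t ≠ 0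
  zero : z 0 = 0
  hasDerivAt : ∀ t : ℝ, 0 < t → ∀ i, HasDerivAt (fun s => z s i)
    (Λ i - a * z t i - b * z t i / ∑ j, z t j) t

variable (Λ a b) in
noncomputable def fluidSolution (t : ℝ) (i : ι) : ℝ :=
  Λ i / (∑ j, Λ j) * relaxation ((∑ j, Λ j) - b) a t

theorem sum_fluidSolution (hS : ∑ j, Λ j ≠ 0) (t : ℝ) :
    ∑ j, fluidSolution Λ a b t j = relaxation ((∑ j, Λ j) - b) a t := by
  simp only [fluidSolution, ← Finset.sum_mul, ← Finset.sum_div, div_self hS, one_mul]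

theorem isFluidSolution_fluidSolution (hΛ : ∀ i, 0 ≤ Λ i) (hb : 0 ≤ b)
    (hbS : b < ∑ j, Λ j) : IsFluidSolution Λ a b (fluidSolution Λ a b) where
  continuousOn :=
    (continuous_pi fun _ => continuous_const.mul (continuous_relaxation _ _)).continuousOn
  nonneg t ht i :=
    mul_nonneg (div_nonneg (hΛ i) (by linarith)) (relaxation_nonneg (by linarith) ht)
  ne_zero t ht h := (relaxation_pos (a := a) (sub_pos.mpr hbS) ht).ne' <| by
    rw [← sum_fluidSolution (by linarith), h]
    simp
  zero := by
    ext i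
    simp [fluidSolution, relaxation_zero]
  hasDerivAt t ht i := by
    have hS : ∑ j, Λ j ≠ 0 := by linarith
    have hF := (relaxation_pos (a := a) (sub_pos.mpr hbS) ht).ne'
    refine ((hasDerivAt_relaxation _ a t).const_mul (Λ i / ∑ j, Λ j)).congr_deriv ?_
    rw [sum_fluidSolution hS]
    unfold fluidSolution
    field_simp
    ring

namespace IsFluidSolution

theorem continuousOn_apply (hz : IsFluidSolution Λ a b z) (i : ι) :
    ContinuousOn (fun s => z s i) (Ici 0) :=
  (continuous_apply i).comp_continuousOn hz.continuousOn

theorem sum_pos (hz : IsFluidSolution Λ a b z) {t : ℝ} (ht : 0 < t) : 0 < ∑ j, z t j := by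
  obtain ⟨j, hj⟩ := Function.ne_iff.mp (hz.ne_zero t ht)
  exact Finset.sum_pos' (fun k _ => hz.nonneg t ht.le k)
    ⟨j, Finset.mem_univ j, (hz.nonneg t ht.le j).lt_of_ne' hj⟩

theorem hasDerivAt_sum (hz : IsFluidSolution Λ a b z) {t : ℝ} (ht : 0 < t) :
    HasDerivAt (fun s => ∑ j, z s j) ((∑ j, Λ j) - b - a * ∑ j, z t j) t := by
  refine (HasDerivAt.fun_sum fun i _ => hz.hasDerivAt t ht i).congr_deriv ?_
  simp only [Finset.sum_sub_distrib, ← Finset.mul_sum, ← Finset.sum_div, mul_div_assoc,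
    div_self (hz.sum_pos ht).ne']
  ring

theorem sum_eq_relaxation (hz : IsFluidSolution Λ a b z) {t : ℝ} (ht : 0 ≤ t) :
    ∑ j, z t j = relaxation ((∑ j, Λ j) - b) a t := by
  refine sub_eq_zero.mp <| eq_zero_of_hasDerivAt_of_integratingFactor
    (w := fun s => ∑ j, z s j - relaxation ((∑ j, Λ j) - b) a s) (g := fun _ => a)
    (μ := fun s => exp (a * s))
    ((continuousOn_finsetSum _ fun j _ => hz.continuousOn_apply j).sub
      (continuous_relaxation _ _).continuousOn)
    (by fun_prop)
    (fun s hs => ((hz.hasDerivAt_sum hs).sub (hasDerivAt_relaxation _ a s)).congr_deriv (by ring))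
    (fun s _ => by simpa [mul_comm] using ((hasDerivAt_id s).const_mul a).exp)
    (fun s _ => (exp_pos _).ne') (by simp [hz.zero, relaxation_zero]) ht

theorem eq_fluidSolution (hz : IsFluidSolution Λ a b z) (hb : 0 ≤ b) (hbS : b < ∑ j, Λ j)
    {t : ℝ} (ht : 0 ≤ t) (i : ι) : z t i = fluidSolution Λ a b t i := by
  have hc : 0 < (∑ j, Λ j) - b := sub_pos.mpr hbS
  have hS : ∑ j, Λ j ≠ 0 := by linarith
  have hκ : 0 ≤ b / ((∑ j, Λ j) - b) := div_nonneg hb hc.le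
  refine sub_eq_zero.mp <| eq_zero_of_hasDerivAt_of_integratingFactor
    (w := fun s => z s i - fluidSolution Λ a b s i)
    (g := fun s => a + b / relaxation ((∑ j, Λ j) - b) a s)
    ((hz.continuousOn_apply i).sub
      (continuous_const.mul (continuous_relaxation _ _)).continuousOn)
    (by
      have := (continuous_relaxation ((∑ j, Λ j) - b) a).rpow_const fun _ => Or.inr hκ
      fun_prop)
    (fun s hs => ?_)
    (fun s hs => hasDerivAt_exp_mul_rpow_relaxation hc.ne' (relaxation_pos hc hs).ne')
    (fun s hs => (mul_pos (exp_pos _) (Real.rpow_pos_of_pos (relaxation_pos hc hs) _)).ne')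
    (by simp [hz.zero, fluidSolution, relaxation_zero]) ht
  have hF := (relaxation_pos (a := a) hc hs).ne'
  refine ((hz.hasDerivAt s hs i).sub
    ((hasDerivAt_relaxation _ a s).const_mul (Λ i / ∑ j, Λ j))).congr_deriv ?_
  rw [hz.sum_eq_relaxation hs.le]
  unfold fluidSolution
  field_simp
  ring

end IsFluidSolution

end FluidModel

theorem zero_initial_equal_rates_solution_general (K : ℕ) (Λ : Fin K → ℝ) (a : ℝ)
    (hΛ : ∀ i, 0 < Λ i) (hΛ1 : Real.exp (-1) < ∑ i, Λ i) :
    (∀ z : ℝ → Fin K → ℝ,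
      ContinuousOn z (Set.Ici 0) →
      (∀ t : ℝ, 0 ≤ t → ∀ i, 0 ≤ z t i) →
      (∀ t : ℝ, 0 < t → z t ≠ 0) →
      z 0 = 0 →
      (∀ t : ℝ, 0 < t → ∀ i, HasDerivAt (fun s => z s i)
        (Λ i - a * z t i - Real.exp (-1) * z t i / ∑ j, z t j) t) →
      ∀ t : ℝ, 0 ≤ t → ∀ i,
        z t i = if a = 0 then
            Λ i / (∑ j, Λ j) * ((∑ j, Λ j) - Real.exp (-1)) * t
          else
            Λ i / (∑ j, Λ j) * (((∑ j, Λ j) - Real.exp (-1)) / a)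
              * (1 - Real.exp (-(a * t)))) ∧
    (∃ z : ℝ → Fin K → ℝ,
      ContinuousOn z (Set.Ici 0) ∧
      (∀ t : ℝ, 0 ≤ t → ∀ i, 0 ≤ z t i) ∧
      (∀ t : ℝ, 0 < t → z t ≠ 0) ∧
      z 0 = 0 ∧
      (∀ t : ℝ, 0 < t → ∀ i, HasDerivAt (fun s => z s i)
        (Λ i - a * z t i - Real.exp (-1) * z t i / ∑ j, z t j) t) ∧
      (∀ t : ℝ, 0 ≤ t → ∀ i,
        z t i = if a = 0 then
            Λ i / (∑ j, Λ j) * ((∑ j, Λ j) - Real.exp (-1)) * t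
          else
            Λ i / (∑ j, Λ j) * (((∑ j, Λ j) - Real.exp (-1)) / a)
              * (1 - Real.exp (-(a * t))))) := by
  have hE : 0 ≤ exp (-1) := (exp_pos _).le
  refine ⟨fun z hc hnn hne h0 hd t ht i => ?_, fluidSolution Λ a (exp (-1)), ?_⟩
  · rw [← mul_relaxation_eq_ite]
    exact IsFluidSolution.eq_fluidSolution ⟨hc, hnn, hne, h0, hd⟩ hE hΛ1 ht i
  · obtain ⟨hc, hnn, hne, h0, hd⟩ :=
      isFluidSolution_fluidSolution (a := a) (fun i => (hΛ i).le) hE hΛ1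
    exact ⟨hc, hnn, hne, h0, hd, fun t _ i => mul_relaxation_eq_ite _ _ _ _⟩

/-- Property 1(iii): when all impatience parameters equal a ≥ 0, the unique
fluid-model-type solution starting from 0 is
zᵢ(t) = (Λᵢ/‖Λ‖₁)(‖Λ‖₁ − e⁻¹)t (a = 0) or
zᵢ(t) = (Λᵢ/‖Λ‖₁)((‖Λ‖₁ − e⁻¹)/a)(1 − e^{−at}) (a > 0). -/
theorem zero_initial_equal_rates_solution (K : ℕ) (Λ : Fin K → ℝ) (a : ℝ)
    (hΛ : ∀ i, 0 < Λ i) (hΛ1 : Real.exp (-1) < ∑ i, Λ i) (ha : 0 ≤ a) :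
    (∀ z : ℝ → Fin K → ℝ,
      ContinuousOn z (Set.Ici 0) →
      (∀ t : ℝ, 0 ≤ t → ∀ i, 0 ≤ z t i) →
      (∀ t : ℝ, 0 < t → z t ≠ 0) →
      z 0 = 0 →
      (∀ t : ℝ, 0 < t → ∀ i, HasDerivAt (fun s => z s i)
        (Λ i - a * z t i - Real.exp (-1) * z t i / ∑ j, z t j) t) →
      ∀ t : ℝ, 0 ≤ t → ∀ i,
        z t i = if a = 0 then
            Λ i / (∑ j, Λ j) * ((∑ j, Λ j) - Real.exp (-1)) * t
          else
            Λ i / (∑ j, Λ j) * (((∑ j, Λ j) - Real.exp (-1)) / a)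
              * (1 - Real.exp (-(a * t)))) ∧
    (∃ z : ℝ → Fin K → ℝ,
      ContinuousOn z (Set.Ici 0) ∧
      (∀ t : ℝ, 0 ≤ t → ∀ i, 0 ≤ z t i) ∧
      (∀ t : ℝ, 0 < t → z t ≠ 0) ∧
      z 0 = 0 ∧
      (∀ t : ℝ, 0 < t → ∀ i, HasDerivAt (fun s => z s i)
        (Λ i - a * z t i - Real.exp (-1) * z t i / ∑ j, z t j) t) ∧
      (∀ t : ℝ, 0 ≤ t → ∀ i,
        z t i = if a = 0 then
            Λ i / (∑ j, Λ j) * ((∑ j, Λ j) - Real.exp (-1)) * t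
          else
            Λ i / (∑ j, Λ j) * (((∑ j, Λ j) - Real.exp (-1)) / a)
              * (1 - Real.exp (-(a * t))))) :=
  zero_initial_equal_rates_solution_general K Λ a hΛ hΛ1
end

section
/- Let z(·) be a fluid model solution with initial state z⁰ ∈ ℝ₊^K. Then for each i and t ≥ 0, zᵢ(t) = zᵢ⁰ exp(−pᵢt − ∫₀ᵗ e^{−1}/‖z(s)‖₁ ds) + Λᵢ ∫₀ᵗ exp(−pᵢ(t−s) − ∫ₛᵗ e^{−1}/‖z(x)‖₁ dx) ds. Conversely, any continuous nonnegative function, nonzero for t > 0, satisfying this integral equation is a fluid model solution. -/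
/-!
For `t > 0` the fluid equation is the linear ODE `zᵢ' = Λᵢ - (pᵢ + e⁻¹/‖z‖₁) zᵢ`, and the second
formula is its variation-of-constants solution: if `Q` is a primitive of `pᵢ + e⁻¹/‖z‖₁`, both
equations say that `(zᵢ e^Q)' = Λᵢ e^Q`. When `z(0) = 0` the coefficient `e⁻¹/‖z‖₁` need not be
integrable at `0`, so `Q` is based at an interior point; as `Q` is increasing, `e^Q` stays bounded
near `0`, hence `zᵢ e^Q → 0` and the fundamental theorem of calculus still applies down to `t = 0`.
-/

open MeasureTheory intervalIntegral Set Filter Real Topology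

theorem intervalIntegrable_of_continuousOn_Ioc_of_norm_le {g : ℝ → ℝ} {ε u C : ℝ}
    (hεu : ε ≤ u) (hg : ContinuousOn g (Ioc ε u)) (hC : ∀ x ∈ Ioc ε u, ‖g x‖ ≤ C) :
    IntervalIntegrable g volume ε u := by
  rw [intervalIntegrable_iff_integrableOn_Ioc_of_le hεu]
  exact Integrable.of_bound (hg.aestronglyMeasurable measurableSet_Ioc) C
    ((ae_restrict_iff' measurableSet_Ioc).2 (ae_of_all _ hC))

theorem eq_add_integral_iff_hasDerivAt {f g : ℝ → ℝ} {ε : ℝ} (hf : ContinuousOn f (Ici ε))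
    (hg : ContinuousOn g (Ioi ε)) (hgi : ∀ u, ε ≤ u → IntervalIntegrable g volume ε u) :
    (∀ u, ε ≤ u → f u = f ε + ∫ s in ε..u, g s) ↔ ∀ x, ε < x → HasDerivAt f (g x) x := by
  constructor
  · intro h x hx
    have hF : HasDerivAt (fun u => f ε + ∫ s in ε..u, g s) (g x) x :=
      (integral_hasDerivAt_right (hgi x hx.le) (hg.stronglyMeasurableAtFilter isOpen_Ioi x hx)
        (hg.continuousAt (Ioi_mem_nhds hx))).const_add _
    exact hF.congr_of_eventuallyEq (eventually_of_mem (Ioi_mem_nhds hx) fun u hu => h u hu.le)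
  · intro h u hu
    rw [integral_eq_sub_of_hasDerivAt_of_le hu (hf.mono Icc_subset_Ici_self)
      (fun x hx => h x hx.1) (hgi u hu)]
    ring

theorem hasDerivAt_iff_hasDerivAt_mul_exp {f Q : ℝ → ℝ} {q L x : ℝ} (hQ : HasDerivAt Q q x) :
    HasDerivAt f (L - q * f x) x ↔ HasDerivAt (fun u => f u * exp (Q u)) (L * exp (Q x)) x := by
  constructor
  · intro hf
    have h : HasDerivAt (fun u => f u * exp (Q u))
        ((L - q * f x) * exp (Q x) + f x * (exp (Q x) * q)) x :=
      hf.mul hQ.exp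
    convert h using 1
    ring
  · intro hg
    have hf : (fun u => f u * exp (Q u) * exp (-Q u)) = f :=
      funext fun u => by rw [mul_assoc, ← exp_add, add_neg_cancel, exp_zero, mul_one]
    have h : HasDerivAt (fun u => f u * exp (Q u) * exp (-Q u))
        (L * exp (Q x) * exp (-Q x) + f x * exp (Q x) * (exp (-Q x) * -q)) x :=
      hg.mul hQ.neg.exp
    rw [hf] at h
    convert h using 1
    rw [exp_neg]
    field_simp
    ring

/-- The solution operator of `y' = -(c + a) y` from time `s` to time `u`. -/
noncomputable def propagator (c : ℝ) (a : ℝ → ℝ) (s u : ℝ) : ℝ :=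
  exp (-(c * (u - s)) - ∫ x in s..u, a x)

noncomputable def integratingExponent (c : ℝ) (a : ℝ → ℝ) (b u : ℝ) : ℝ :=
  c * u + ∫ x in b..u, a x

section Propagator

variable {a : ℝ → ℝ} {b c s u ε : ℝ}

theorem propagator_le_one (hc : 0 ≤ c) (ha : ∀ x ∈ Icc s u, 0 ≤ a x) (hsu : s ≤ u) :
    propagator c a s u ≤ 1 := by
  rw [propagator, exp_le_one_iff]
  nlinarith [integral_nonneg (μ := volume) hsu ha, mul_nonneg hc (sub_nonneg.2 hsu)]

theorem propagator_eq_exp_sub (hs : IntervalIntegrable a volume b s)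
    (hu : IntervalIntegrable a volume b u) :
    propagator c a s u = exp (integratingExponent c a b s - integratingExponent c a b u) := by
  rw [propagator, integratingExponent, integratingExponent, ← integral_interval_sub_left hu hs]
  congr 1
  ring

theorem hasDerivAt_integratingExponent (hac : ContinuousOn a (Ioi ε)) (hb : ε < b) {x : ℝ}
    (hx : ε < x) : HasDerivAt (integratingExponent c a b) (c + a x) x := by
  have hab : IntervalIntegrable a volume b x :=
    (hac.mono fun y hy => lt_of_lt_of_le (lt_min hb hx) hy.1).intervalIntegrable
  have h : HasDerivAt (integratingExponent c a b) (c * 1 + a x) x :=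
    ((hasDerivAt_id' x).const_mul c).add (integral_hasDerivAt_right hab
      (hac.stronglyMeasurableAtFilter isOpen_Ioi x hx) (hac.continuousAt (Ioi_mem_nhds hx)))
  rwa [mul_one] at h

theorem continuousWithinAt_integratingExponent (hac : ContinuousOn a (Ici ε)) (hb : ε < b) :
    ContinuousWithinAt (integratingExponent c a b) (Ici ε) ε := by
  have hab : IntervalIntegrable a volume ε b :=
    (hac.mono fun y hy => le_trans (le_min le_rfl hb.le) hy.1).intervalIntegrable
  have hprim := continuousOn_primitive_interval' hab right_mem_uIcc ε left_mem_uIcc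
  rw [uIcc_of_le hb.le] at hprim
  exact (continuousWithinAt_id.const_mul c).add
    (hprim.mono_of_mem_nhdsWithin (Icc_mem_nhdsGE hb))

end Propagator

theorem eq_variationOfConstants_iff {a f Q : ℝ → ℝ} {c L ε u : ℝ} (hεu : ε ≤ u)
    (hprop : ∀ s, ε < s → s ≤ u → propagator c a s u = exp (Q s - Q u))
    (hstart : f ε * propagator c a ε u = f ε * exp (Q ε - Q u)) :
    f u = f ε * propagator c a ε u + L * ∫ s in ε..u, propagator c a s u ↔
      f u * exp (Q u) = f ε * exp (Q ε) + ∫ s in ε..u, L * exp (Q s) := by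
  have hint : ∫ s in ε..u, propagator c a s u = (∫ s in ε..u, exp (Q s)) / exp (Q u) := by
    rw [← intervalIntegral.integral_div]
    refine integral_congr_ae (ae_of_all _ fun s hs => ?_)
    rw [uIoc_of_le hεu] at hs
    rw [hprop s hs.1 hs.2, exp_sub]
  rw [hstart, hint, intervalIntegral.integral_const_mul, exp_sub, mul_div_assoc', mul_div_assoc',
    ← add_div, eq_div_iff (exp_pos (Q u)).ne']

theorem hasDerivAt_iff_eq_variationOfConstants_of_integratingFactor {a f Q : ℝ → ℝ} {c L ε : ℝ}
    (hQ : ∀ x, ε < x → HasDerivAt Q (c + a x) x)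
    (hprop : ∀ s u, ε < s → s ≤ u → propagator c a s u = exp (Q s - Q u))
    (hstart : ∀ u, ε ≤ u → f ε * propagator c a ε u = f ε * exp (Q ε - Q u))
    (hfQ : ContinuousOn (fun u => f u * exp (Q u)) (Ici ε))
    (hQi : ∀ u, ε ≤ u → IntervalIntegrable (fun s => exp (Q s)) volume ε u) :
    (∀ x, ε < x → HasDerivAt f (L - (c + a x) * f x) x) ↔
      ∀ u, ε ≤ u → f u = f ε * propagator c a ε u + L * ∫ s in ε..u, propagator c a s u := by
  have hQc : ContinuousOn Q (Ioi ε) := fun x hx => (hQ x hx).continuousAt.continuousWithinAt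
  calc (∀ x, ε < x → HasDerivAt f (L - (c + a x) * f x) x)
      ↔ ∀ x, ε < x → HasDerivAt (fun u => f u * exp (Q u)) (L * exp (Q x)) x :=
        forall₂_congr fun x hx => hasDerivAt_iff_hasDerivAt_mul_exp (hQ x hx)
    _ ↔ ∀ u, ε ≤ u → f u * exp (Q u) = f ε * exp (Q ε) + ∫ s in ε..u, L * exp (Q s) :=
        (eq_add_integral_iff_hasDerivAt hfQ (continuousOn_const.mul hQc.rexp)
          fun u hu => (hQi u hu).const_mul L).symm
    _ ↔ _ := forall₂_congr fun u hu =>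
        (eq_variationOfConstants_iff hu (fun s hs hsu => hprop s u hs hsu) (hstart u hu)).symm

theorem hasDerivAt_iff_eq_variationOfConstants {a f : ℝ → ℝ} {c L ε : ℝ} (hc : 0 ≤ c)
    (ha : ∀ x, ε < x → 0 ≤ a x) (hac : ContinuousOn a (Ioi ε)) (hf : ContinuousOn f (Ici ε))
    (hstart : f ε = 0 ∨ ContinuousOn a (Ici ε)) :
    (∀ x, ε < x → HasDerivAt f (L - (c + a x) * f x) x) ↔
      ∀ u, ε ≤ u → f u = f ε * propagator c a ε u + L * ∫ s in ε..u, propagator c a s u := by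
  have hεb : ε < ε + 1 := lt_add_one ε
  set Q := integratingExponent c a (ε + 1)
  have hQ : ∀ x, ε < x → HasDerivAt Q (c + a x) x := fun x hx =>
    hasDerivAt_integratingExponent hac hεb hx
  have hai : ∀ s, ε < s → IntervalIntegrable a volume (ε + 1) s := fun s hs =>
    (hac.mono fun x hx => lt_of_lt_of_le (lt_min hεb hs) hx.1).intervalIntegrable
  have hprop : ∀ s u, ε < s → s ≤ u → propagator c a s u = exp (Q s - Q u) := fun s u hs hsu =>
    propagator_eq_exp_sub (hai s hs) (hai u (hs.trans_le hsu))
  -- `exp ∘ Q` is monotone, hence bounded near `ε` even when `a` is not integrable there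
  have hexpQ_le : ∀ s u, ε < s → s ≤ u → ‖exp (Q s)‖ ≤ exp (Q u) := fun s u hs hsu => by
    have h := propagator_le_one hc (fun x hx => ha x (hs.trans_le hx.1)) hsu
    rwa [hprop s u hs hsu, exp_sub, div_le_one (exp_pos _), ← norm_of_nonneg (exp_pos _).le] at h
  have hQi : ∀ u, ε ≤ u → IntervalIntegrable (fun s => exp (Q s)) volume ε u := fun u hu =>
    intervalIntegrable_of_continuousOn_Ioc_of_norm_le hu
      (fun x hx => (hQ x hx.1).continuousAt.rexp.continuousWithinAt) fun s hs =>
        hexpQ_le s u hs.1 hs.2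
  have hfQ : ContinuousWithinAt (fun u => f u * exp (Q u)) (Ici ε) ε →
      ContinuousOn (fun u => f u * exp (Q u)) (Ici ε) := fun hε x hx =>
    (eq_or_lt_of_le (α := ℝ) hx).elim (fun hεx => hεx ▸ hε) fun hx =>
      ((hf.continuousAt (Ici_mem_nhds hx)).mul (hQ x hx).continuousAt.rexp).continuousWithinAt
  rcases hstart with h0 | hac0
  · refine hasDerivAt_iff_eq_variationOfConstants_of_integratingFactor hQ hprop
      (fun u _ => by rw [h0, zero_mul, zero_mul]) (hfQ ?_) hQi
    have hf0 : Tendsto f (𝓝[>] ε) (𝓝 0) := h0 ▸ (hf ε self_mem_Ici).mono Ioi_subset_Ici_self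
    rw [← continuousWithinAt_Ioi_iff_Ici, ContinuousWithinAt, h0, zero_mul]
    refine hf0.zero_mul_isBoundedUnder_le
      (isBoundedUnder_of_eventually_le (a := exp (Q (ε + 1))) ?_)
    filter_upwards [Ioc_mem_nhdsGT hεb] with s hs using hexpQ_le s (ε + 1) hs.1 hs.2
  · have hai₀ : ∀ v, ε ≤ v → IntervalIntegrable a volume (ε + 1) v := fun v hv =>
      (hac0.mono fun x hx => le_trans (le_min hεb.le hv) hx.1).intervalIntegrable
    refine hasDerivAt_iff_eq_variationOfConstants_of_integratingFactor hQ hprop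
      (fun u hu => by rw [propagator_eq_exp_sub (hai₀ ε le_rfl) (hai₀ u hu)])
      (hfQ ((hf ε self_mem_Ici).mul (continuousWithinAt_integratingExponent hac0 hεb).rexp)) hQi

theorem sum_pos_of_nonneg_of_ne_zero {ι : Type*} [Fintype ι] {x : ι → ℝ} (hx : ∀ j, 0 ≤ x j)
    (hx0 : x ≠ 0) : 0 < ∑ j, x j :=
  Fintype.sum_pos (lt_of_le_of_ne (fun j => hx j) (Ne.symm hx0))

theorem continuousOn_div_sum {ι : Type*} [Fintype ι] {z : ℝ → ι → ℝ} {S : Set ℝ} (κ : ℝ)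
    (hzc : ContinuousOn z S) (hznn : ∀ t ∈ S, ∀ j, 0 ≤ z t j) (hzne : ∀ t ∈ S, z t ≠ 0) :
    ContinuousOn (fun t => κ / ∑ j, z t j) S :=
  continuousOn_const.div
    (continuousOn_finsetSum _ fun j _ => (continuous_apply j).comp_continuousOn hzc)
    fun t ht => (sum_pos_of_nonneg_of_ne_zero (hznn t ht) (hzne t ht)).ne'

/-- The coordinate `m(x)ᵢ` of the paper's `m`. -/
noncomputable def marketShare {K : ℕ} (Λ x : Fin K → ℝ) (i : Fin K) : ℝ :=
  if x = 0 then Λ i / ∑ j, Λ j else x i / ∑ j, x j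

section FluidModel

variable {K : ℕ} {Λ p x : Fin K → ℝ} {z : ℝ → Fin K → ℝ}

theorem norm_marketShare_le_one (i : Fin K) (hx : ∀ j, 0 ≤ x j) (hx0 : x ≠ 0) :
    ‖marketShare Λ x i‖ ≤ 1 := by
  have hpos := sum_pos_of_nonneg_of_ne_zero hx hx0
  rw [marketShare, if_neg hx0, norm_of_nonneg (div_nonneg (hx i) hpos.le), div_le_one hpos]
  exact Finset.single_le_sum (fun j _ => hx j) (Finset.mem_univ i)

theorem continuousOn_marketShare {S : Set ℝ} (i : Fin K) (hzc : ContinuousOn z S)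
    (hznn : ∀ t ∈ S, ∀ j, 0 ≤ z t j) (hzne : ∀ t ∈ S, z t ≠ 0) :
    ContinuousOn (fun t => marketShare Λ (z t) i) S := by
  refine (((continuous_apply i).comp_continuousOn hzc).mul
    (continuousOn_div_sum 1 hzc hznn hzne)).congr fun t ht => ?_
  show _ = z t i * (1 / ∑ j, z t j)
  rw [marketShare, if_neg (hzne t ht), mul_one_div]

theorem fluidEquation_iff_hasDerivAt (i : Fin K) (hzc : ContinuousOn z (Ici 0))
    (hznn : ∀ t : ℝ, 0 ≤ t → ∀ j, 0 ≤ z t j) (hzne : ∀ t : ℝ, 0 < t → z t ≠ 0) :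
    (∀ t : ℝ, 0 ≤ t → z t i = z 0 i + t * Λ i
        - exp (-1) * (∫ s in (0:ℝ)..t, marketShare Λ (z s) i) - p i * ∫ s in (0:ℝ)..t, z s i) ↔
      ∀ x : ℝ, 0 < x →
        HasDerivAt (fun s => z s i) (Λ i - (p i + exp (-1) / ∑ j, z x j) * z x i) x := by
  have hzi : ContinuousOn (fun s => z s i) (Ici 0) := (continuous_apply i).comp_continuousOn hzc
  have hm := continuousOn_marketShare (Λ := Λ) i (hzc.mono Ioi_subset_Ici_self)
    (fun t ht => hznn t (le_of_lt ht)) hzne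
  have hmi : ∀ u, 0 ≤ u → IntervalIntegrable (fun s => marketShare Λ (z s) i) volume 0 u :=
    fun u hu => intervalIntegrable_of_continuousOn_Ioc_of_norm_le hu (hm.mono Ioc_subset_Ioi_self)
      fun s hs => norm_marketShare_le_one i (hznn s hs.1.le) (hzne s hs.1)
  have hzii : ∀ u, 0 ≤ u → IntervalIntegrable (fun s => z s i) volume 0 u := fun u hu =>
    (hzi.mono Icc_subset_Ici_self).intervalIntegrable_of_Icc hu
  calc _ ↔ ∀ t : ℝ, 0 ≤ t → z t i = z 0 i
          + ∫ s in (0:ℝ)..t, (Λ i - exp (-1) * marketShare Λ (z s) i - p i * z s i) :=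
        forall₂_congr fun t ht => by
          rw [integral_sub (intervalIntegrable_const.sub ((hmi t ht).const_mul _))
              ((hzii t ht).const_mul _), integral_sub intervalIntegrable_const
              ((hmi t ht).const_mul _), intervalIntegral.integral_const,
            intervalIntegral.integral_const_mul, intervalIntegral.integral_const_mul,
            smul_eq_mul, sub_zero, add_sub_assoc, add_sub_assoc, sub_sub]
    _ ↔ ∀ x : ℝ, 0 < x →
          HasDerivAt (fun s => z s i) (Λ i - exp (-1) * marketShare Λ (z x) i - p i * z x i) x :=
        eq_add_integral_iff_hasDerivAt hzi
          ((continuousOn_const.sub (continuousOn_const.mul hm)).sub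
            (continuousOn_const.mul (hzi.mono Ioi_subset_Ici_self)))
          fun u hu => (intervalIntegrable_const.sub ((hmi u hu).const_mul _)).sub
            ((hzii u hu).const_mul _)
    _ ↔ _ :=
        forall₂_congr fun x hx => by
          rw [show Λ i - exp (-1) * marketShare Λ (z x) i - p i * z x i
              = Λ i - (p i + exp (-1) / ∑ j, z x j) * z x i by
            rw [marketShare, if_neg (hzne x hx)]; ring]

theorem hasDerivAt_iff_fluidVariationOfConstants (i : Fin K) (hp : 0 ≤ p i)
    (hzc : ContinuousOn z (Ici 0)) (hznn : ∀ t : ℝ, 0 ≤ t → ∀ j, 0 ≤ z t j)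
    (hzne : ∀ t : ℝ, 0 < t → z t ≠ 0) :
    (∀ x : ℝ, 0 < x →
        HasDerivAt (fun s => z s i) (Λ i - (p i + exp (-1) / ∑ j, z x j) * z x i) x) ↔
      ∀ t : ℝ, 0 ≤ t → z t i = z 0 i * propagator (p i) (fun s => exp (-1) / ∑ j, z s j) 0 t
        + Λ i * ∫ s in (0:ℝ)..t, propagator (p i) (fun s => exp (-1) / ∑ j, z s j) s t := by
  have hznn' : ∀ t ∈ Ioi (0 : ℝ), ∀ j, 0 ≤ z t j := fun t ht => hznn t (le_of_lt ht)
  have hstart : z 0 i = 0 ∨ ContinuousOn (fun s => exp (-1) / ∑ j, z s j) (Ici 0) := by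
    by_cases h0 : z 0 = 0
    · exact .inl (by simp [h0])
    · refine .inr (continuousOn_div_sum _ hzc (fun t ht => hznn t ht) fun t ht => ?_)
      rcases (mem_Ici.1 ht).eq_or_lt with rfl | ht
      exacts [h0, hzne t ht]
  exact hasDerivAt_iff_eq_variationOfConstants hp
    (fun x hx => div_nonneg (exp_pos _).le
      (sum_pos_of_nonneg_of_ne_zero (hznn' x hx) (hzne x hx)).le)
    (continuousOn_div_sum _ (hzc.mono Ioi_subset_Ici_self) hznn' hzne)
    ((continuous_apply i).comp_continuousOn hzc) hstart

end FluidModel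

theorem fluid_model_equivalent_description_general (K : ℕ) (Λ p : Fin K → ℝ)
    (hp : ∀ i, 0 < p i)
    (z0 : Fin K → ℝ)
    (z : ℝ → Fin K → ℝ)
    (hzc : ContinuousOn z (Set.Ici 0))
    (hznn : ∀ t : ℝ, 0 ≤ t → ∀ i, 0 ≤ z t i)
    (hzne : ∀ t : ℝ, 0 < t → z t ≠ 0)
    (hinit : z 0 = z0) :
    (∀ t : ℝ, 0 ≤ t → ∀ i,
      z t i = z0 i + t * Λ i
        - Real.exp (-1) * (∫ s in (0:ℝ)..t,
            if z s = 0 then Λ i / ∑ j, Λ j else z s i / ∑ j, z s j)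
        - p i * ∫ s in (0:ℝ)..t, z s i) ↔
    (∀ t : ℝ, 0 ≤ t → ∀ i,
      z t i = z0 i * Real.exp (-(p i * t)
          - ∫ s in (0:ℝ)..t, Real.exp (-1) / ∑ j, z s j)
        + Λ i * ∫ s in (0:ℝ)..t, Real.exp (-(p i * (t - s))
            - ∫ x in s..t, Real.exp (-1) / ∑ j, z x j)) := by
  subst hinit
  have key := fun i => (fluidEquation_iff_hasDerivAt (Λ := Λ) (p := p) i hzc hznn hzne).trans
    (hasDerivAt_iff_fluidVariationOfConstants i (hp i).le hzc hznn hzne)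
  simp only [propagator, sub_zero] at key
  exact ⟨fun h t ht i => (key i).1 (fun t ht => h t ht i) t ht,
    fun h t ht i => (key i).2 (fun t ht => h t ht i) t ht⟩

/-- Lemma 2 (equivalent description of the fluid model): a continuous
nonnegative function, nonzero for t > 0, satisfies the fluid model integral
equation iff it satisfies the variation-of-constants integral equation. -/
theorem fluid_model_equivalent_description (K : ℕ) (Λ p : Fin K → ℝ)
    (hΛ : ∀ i, 0 < Λ i) (hΛ1 : Real.exp (-1) < ∑ i, Λ i) (hp : ∀ i, 0 < p i)
    (z0 : Fin K → ℝ) (hz0 : ∀ i, 0 ≤ z0 i)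
    (z : ℝ → Fin K → ℝ)
    (hzc : ContinuousOn z (Set.Ici 0))
    (hznn : ∀ t : ℝ, 0 ≤ t → ∀ i, 0 ≤ z t i)
    (hzne : ∀ t : ℝ, 0 < t → z t ≠ 0)
    (hinit : z 0 = z0) :
    (∀ t : ℝ, 0 ≤ t → ∀ i,
      z t i = z0 i + t * Λ i
        - Real.exp (-1) * (∫ s in (0:ℝ)..t,
            if z s = 0 then Λ i / ∑ j, Λ j else z s i / ∑ j, z s j)
        - p i * ∫ s in (0:ℝ)..t, z s i) ↔
    (∀ t : ℝ, 0 ≤ t → ∀ i,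
      z t i = z0 i * Real.exp (-(p i * t)
          - ∫ s in (0:ℝ)..t, Real.exp (-1) / ∑ j, z s j)
        + Λ i * ∫ s in (0:ℝ)..t, Real.exp (-(p i * (t - s))
            - ∫ x in s..t, Real.exp (-1) / ∑ j, z x j)) :=
  fluid_model_equivalent_description_general K Λ p hp z0 z hzc hznn hzne hinit
end
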